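/- arXiv:1205.2535 — 2 statements merged into one kernel-verified Lean document; each statement's English description precedes it below -/
import Mathlib

section
/- Let G be a finite simple non-complete graph and let ≺ be a linear ordering of its vertices satisfying the LexBFS property (for all a, b, c with c ≺ b ≺ a, ca an edge and cb not an edge, there exists d ≺ c with db an edge and da not an edge). Let z be the last vertex of the ordering. Then there exists a connected component C of G − N[z] such that for every neighbor x of z, either N[x] = N[z] or x has a neighbor in C. -/
/-!
Let `S` be the set of vertices outside `N[z]` and `y` its last vertex. Since `z` is last, every
application of the LexBFS condition with `a = z` produces a vertex of `S`; repeated applications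
give descending chains, so arguments go by strong induction on the order. The key fact is that
an edge of `G[S]` never jumps over a vertex of another component of `G[S]`. With it one shows
that a neighbour `x` of `z` with a neighbour in `S` has one in the component `C` of `y`: for
an `S`-neighbour `v ∉ C` of `x` there is a vertex `c ∈ C` with `v < c < x`, and the LexBFS
condition on `(x, c, v)` yields a smaller such `v`. A neighbour of `z` without neighbours in `S`
is adjacent to all of `N(z)`, i.e. `N[x] = N[z]`.
-/

namespace SimpleGraph

variable {V : Type*}

def IsLexBFSOrder [LT V] (G : SimpleGraph V) : Prop :=
  ∀ a b c : V, c < b → b < a → G.Adj c a → ¬ G.Adj c b →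
    ∃ d : V, d < c ∧ G.Adj d b ∧ ¬ G.Adj d a

def closedNbhd (G : SimpleGraph V) (v : V) : Set V := {w | w = v ∨ G.Adj v w}

variable {G : SimpleGraph V} {z : V}

theorem adj_of_notMem_closedNbhd_compl {w : V} (hw : w ∉ (G.closedNbhd z)ᶜ) (hwz : w ≠ z) :
    G.Adj z w :=
  (not_not.mp hw).resolve_left hwz

theorem induce_reachable_of_adj {s : Set V} {u v : s} (h : G.Adj u v) :
    (G.induce s).Reachable u v :=
  Adj.reachable h

variable [LinearOrder V] (hlex : G.IsLexBFSOrder) (hz : ∀ w, w ≤ z)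
include hlex hz

local notation "S" => (G.closedNbhd z)ᶜ

theorem IsLexBFSOrder.exists_lt_mem_closedNbhd_compl_adj {b c : V} (hcb : c < b) (hbz : b ≠ z)
    (hc : c ∉ S) (hncb : ¬ G.Adj c b) : ∃ d < c, d ∈ S ∧ G.Adj d b := by
  have hbz' : b < z := (hz b).lt_of_ne hbz
  obtain ⟨d, hdc, hdb, hdz⟩ :=
    hlex z b c hcb hbz' (adj_of_notMem_closedNbhd_compl hc (hcb.trans hbz').ne).symm hncb
  refine ⟨d, hdc, ?_, hdb⟩
  rintro (rfl | hzd)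
  exacts [(hdc.trans hcb).not_ge (hz b), hdz hzd.symm]

theorem IsLexBFSOrder.closedNbhd_compl_nonempty (hnc : ∃ u v : V, u ≠ v ∧ ¬ G.Adj u v) :
    (S).Nonempty := by
  obtain ⟨u, v, huv, hnuv⟩ := hnc
  wlog huv' : u < v generalizing u v
  · exact this v u huv.symm (fun h => hnuv h.symm) (huv.lt_or_gt.resolve_left huv')
  by_contra hS
  have hS' : ∀ w, w ∉ S := fun w hw => hS ⟨w, hw⟩
  rcases eq_or_ne v z with rfl | hvz
  · exact hnuv (adj_of_notMem_closedNbhd_compl (hS' u) huv).symm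
  · obtain ⟨d, -, hd, -⟩ := hlex.exists_lt_mem_closedNbhd_compl_adj hz huv' hvz (hS' u) hnuv
    exact hS' d hd

variable [Finite V]

theorem IsLexBFSOrder.reachable_of_adj_of_lt_of_lt {v w c : ↥S} (hvw : G.Adj v w) (hvc : v < c)
    (hcw : c < w) : (G.induce S).Reachable v c := by
  induction v using WellFoundedLT.induction generalizing w c with
  | _ v ih =>
  by_cases hvc' : G.Adj v c
  · exact Adj.reachable hvc'
  obtain ⟨j, hjv, hjc, hjw⟩ := hlex w c v hvc hcw hvw hvc'
  by_cases hj : j ∈ S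
  · exact (ih ⟨j, hj⟩ hjv hjc hjv hvc).symm.trans (induce_reachable_of_adj hjc)
  · obtain ⟨k, hkj, hk, hkw⟩ := hlex.exists_lt_mem_closedNbhd_compl_adj hz
      (hjv.trans (hvc.trans hcw)) (fun h => w.2 (Or.inl h)) hj hjw
    have hkc : k < c := hkj.trans (hjv.trans hvc)
    exact (induce_reachable_of_adj hvw).trans
      ((induce_reachable_of_adj (u := ⟨k, hk⟩) hkw).symm.trans
        (ih ⟨k, hk⟩ (hkj.trans hjv) hkw hkc hcw))

theorem IsLexBFSOrder.forall_not_adj_of_forall_reachable_not_adj {y : ↥S}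
    (hy : ∀ s : ↥S, s ≤ y) {x : V} (hx : G.Adj z x)
    (hxC : ∀ s : ↥S, (G.induce S).Reachable s y → ¬ G.Adj x s) (v : ↥S) :
    ¬ G.Adj x v := by
  induction v using WellFoundedLT.induction with
  | _ v ih =>
  intro hxv
  have hvC : ¬ (G.induce S).Reachable v y := fun h => hxC v h hxv
  have hvy : v < y := (hy v).lt_of_ne (by rintro rfl; exact hvC .rfl)
  have hxz : x ≠ z := (G.ne_of_adj hx).symm
  have hx' : x ∉ S := fun h => h (Or.inr hx)
  obtain ⟨c, hcy, hvc, hcx⟩ :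
      ∃ c : ↥S, (G.induce S).Reachable c y ∧ (v : V) < c ∧ (c : V) < x := by
    rcases lt_or_gt_of_ne (show x ≠ y from fun h => hx' (h ▸ y.2)) with hxy | hyx
    · obtain ⟨d, hdx, hd, hdy⟩ := hlex.exists_lt_mem_closedNbhd_compl_adj hz hxy
        (fun h => y.2 (Or.inl h)) hx' (fun h => hxC y .rfl h)
      refine ⟨⟨d, hd⟩, induce_reachable_of_adj hdy, ?_, hdx⟩
      by_contra! hdv
      have hdy' := induce_reachable_of_adj (s := S) (u := ⟨d, hd⟩) hdy
      have hdv' : d < v := hdv.lt_of_ne (by rintro rfl; exact hvC hdy')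
      exact hvC ((hlex.reachable_of_adj_of_lt_of_lt hz hdy hdv' hvy).symm.trans hdy')
    · exact ⟨y, .rfl, hvy, hyx⟩
  obtain ⟨f, hfv, hfc, hfx⟩ :=
    hlex x c v hvc hcx hxv.symm (fun h => hvC ((induce_reachable_of_adj h).trans hcy))
  by_cases hf : f ∈ S
  · exact hvC ((hlex.reachable_of_adj_of_lt_of_lt hz (v := ⟨f, hf⟩) hfc hfv hvc).symm.trans
      ((induce_reachable_of_adj hfc).trans hcy))
  · obtain ⟨g, hgf, hg, hgx⟩ :=
      hlex.exists_lt_mem_closedNbhd_compl_adj hz (hfv.trans (hvc.trans hcx)) hxz hf hfx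
    exact ih ⟨g, hg⟩ (hgf.trans hfv) hgx.symm

theorem IsLexBFSOrder.exists_adj_of_adj_of_lt_of_lt {m : ↥S} {x w : V} (hmw : G.Adj m w)
    (hmx : m < x) (hxw : x < w) (hwz : w ≠ z) : ∃ s : ↥S, G.Adj x s := by
  induction m using WellFoundedLT.induction with
  | _ m ih =>
  by_cases hmx' : G.Adj m x
  · exact ⟨m, hmx'.symm⟩
  obtain ⟨e, hem, hex, hew⟩ := hlex w x m hmx hxw hmw hmx'
  by_cases he : e ∈ S
  · exact ⟨⟨e, he⟩, hex.symm⟩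
  obtain ⟨f, hfe, hf, hfw⟩ :=
    hlex.exists_lt_mem_closedNbhd_compl_adj hz ((hem.trans hmx).trans hxw) hwz he hew
  exact ih ⟨f, hf⟩ (hfe.trans hem) hfw ((hfe.trans hem).trans hmx)

theorem IsLexBFSOrder.adj_of_forall_not_adj {x w : V} (hx : G.Adj z x)
    (hxS : ∀ s : ↥S, ¬ G.Adj x s) (hw : G.Adj z w) (hwx : w ≠ x) : G.Adj x w := by
  by_contra hxw
  rcases hwx.lt_or_gt with hwx | hxw'
  · obtain ⟨d, -, hd, hdx⟩ := hlex.exists_lt_mem_closedNbhd_compl_adj hz hwx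
      (G.ne_of_adj hx).symm (fun h => h (Or.inr hw)) (fun h => hxw h.symm)
    exact hxS ⟨d, hd⟩ hdx.symm
  · obtain ⟨d, hdx, hd, hdw⟩ := hlex.exists_lt_mem_closedNbhd_compl_adj hz hxw'
      (G.ne_of_adj hw).symm (fun h => h (Or.inr hx)) hxw
    obtain ⟨s, hs⟩ := hlex.exists_adj_of_adj_of_lt_of_lt hz (m := ⟨d, hd⟩) hdw hdx hxw'
      (G.ne_of_adj hw).symm
    exact hxS s hs

theorem IsLexBFSOrder.closedNbhd_eq_of_forall_not_adj {x : V} (hx : G.Adj z x)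
    (hxS : ∀ s : ↥S, ¬ G.Adj x s) : G.closedNbhd x = G.closedNbhd z := by
  ext w
  constructor
  · rintro (rfl | hxw)
    · exact Or.inr hx
    · by_contra hw
      exact hxS ⟨w, hw⟩ hxw
  · rintro (rfl | hzw)
    · exact Or.inr hx.symm
    · rcases eq_or_ne w x with rfl | hwx
      · exact Or.inl rfl
      · exact Or.inr (hlex.adj_of_forall_not_adj hz hx hxS hzw hwx)

end SimpleGraph

/-- Berry–Bordat: if `G` is a non-complete graph with a LexBFS ordering
(last vertex `z`), then there is a connected component `C` of `G − N[z]` such that every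
neighbor `x` of `z` satisfies `N[x] = N[z]` or has a neighbor in `C`. -/
theorem stmt_1 {V : Type*} [Fintype V] [LinearOrder V] (G : SimpleGraph V)
    (hnc : ∃ u v : V, u ≠ v ∧ ¬ G.Adj u v)
    (hlex : ∀ a b c : V, c < b → b < a → G.Adj c a → ¬ G.Adj c b →
      ∃ d : V, d < c ∧ G.Adj d b ∧ ¬ G.Adj d a)
    (z : V) (hz : ∀ w : V, w ≤ z) :
    ∃ C : (G.induce {w : V | ¬ (w = z ∨ G.Adj z w)}).ConnectedComponent,
      ∀ x : V, G.Adj z x →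
        ({w : V | w = x ∨ G.Adj x w} = {w : V | w = z ∨ G.Adj z w}) ∨
        ∃ w : {w : V | ¬ (w = z ∨ G.Adj z w)},
          (G.induce {w : V | ¬ (w = z ∨ G.Adj z w)}).connectedComponentMk w = C ∧
          G.Adj x ↑w := by
  replace hlex : G.IsLexBFSOrder := hlex
  have : Nonempty ↥(G.closedNbhd z)ᶜ := (hlex.closedNbhd_compl_nonempty hz hnc).to_subtype
  obtain ⟨y, hy⟩ := Finite.exists_max (fun s : ↥(G.closedNbhd z)ᶜ => s)
  refine ⟨(G.induce _).connectedComponentMk y, fun x hx => ?_⟩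
  by_cases hxC : ∃ s : ↥(G.closedNbhd z)ᶜ, (G.induce _).Reachable s y ∧ G.Adj x s
  · obtain ⟨s, hsy, hxs⟩ := hxC
    exact Or.inr ⟨s, SimpleGraph.ConnectedComponent.sound hsy, hxs⟩
  · refine Or.inl (hlex.closedNbhd_eq_of_forall_not_adj hz hx ?_)
    exact hlex.forall_not_adj_of_forall_reachable_not_adj hz hy hx fun s hsy hxs =>
      hxC ⟨s, hsy, hxs⟩
end

section
/- Every non-empty finite simple graph G containing no induced 3-wheel has a vertex whose neighborhood induces a disjoint union of cliques (equivalently, a P₃-free graph). -/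
open SimpleGraph

/-- `G` contains a 3-wheel: there is a hole (an induced cycle of length at least 4,
given by a graph embedding of `cycleGraph n` into `G`) and a vertex `v` off the hole
adjacent to three consecutive vertices of the hole. -/
def ContainsThreeWheel {V : Type*} (G : SimpleGraph V) : Prop :=
  ∃ (n : ℕ), 4 ≤ n ∧ ∃ (e : SimpleGraph.cycleGraph n ↪g G) (v : V),
    (∀ i : Fin n, v ≠ e i) ∧
    ∃ i j k : Fin n, (SimpleGraph.cycleGraph n).Adj i j ∧
      (SimpleGraph.cycleGraph n).Adj j k ∧ i ≠ k ∧
      G.Adj v (e i) ∧ G.Adj v (e j) ∧ G.Adj v (e k)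

/-!
Pick a vertex `t` and a component `C` of `G - N[t]` of least possible size, and `v ∈ C` with
`|N[v]|` least among the vertices of `C`. Since `N(C) ⊆ N(t)`, minimality of `C` forces every
component of `G - N[v]` that meets `C` to leave `C` and hence to contain `t`. Minimality of `N[v]`
then gives each of two nonadjacent neighbours `a, b` of `v` a neighbour in the component of `t`,
so `a` and `b` are joined by a path through `G - N[v]`. A shortest such path closes with `v` into
a hole, and a common neighbour of `a`, `v`, `b` would be the centre of a 3-wheel.
-/

namespace SimpleGraph

variable {V : Type*} {G : SimpleGraph V}

theorem spanningCoe_induce_adj {s : Set V} {x y : V} :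
    (G.induce s).spanningCoe.Adj x y ↔ G.Adj x y ∧ x ∈ s ∧ y ∈ s := by
  simp [map_adj]

theorem reachable_induce_of_reachable_spanningCoe {s : Set V} {x y : V} (hx : x ∈ s)
    (h : (G.induce s).spanningCoe.Reachable x y) :
    ∃ hy : y ∈ s, (G.induce s).Reachable ⟨x, hx⟩ ⟨y, hy⟩ := by
  obtain ⟨p⟩ := h
  induction p with
  | nil => exact ⟨hx, .rfl⟩
  | cons hxz _ ih =>
    obtain ⟨⟨_, _⟩, ⟨z, hz⟩, hadj, rfl, rfl⟩ := (map_adj _ _ _ _).mp hxz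
    obtain ⟨hy, hzy⟩ := ih hz
    exact ⟨hy, hadj.reachable.trans hzy⟩

theorem Walk.not_adj_getVert_of_length_eq_dist {u v : V} (p : G.Walk u v)
    (hp : p.length = G.dist u v) {i j : ℕ} (hij : i + 2 ≤ j) (hj : j ≤ p.length) :
    ¬G.Adj (p.getVert i) (p.getVert j) := fun h ↦ by
  have := G.dist_le ((p.take i).append (cons h (p.drop j)))
  simp only [length_append, take_length, length_cons, drop_length] at this
  omega

def Walk.pathGraphEmbeddingOfLengthEqDist {u v : V} (p : G.Walk u v)
    (hp : p.length = G.dist u v) : pathGraph (p.length + 1) ↪g G where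
  toFun i := p.getVert i
  inj' i j h := Fin.ext <| (p.isPath_of_length_eq_dist hp).getVert_injOn
    (Nat.lt_succ_iff.mp i.isLt) (Nat.lt_succ_iff.mp j.isLt) h
  map_rel_iff' {i j} := by
    change G.Adj (p.getVert i) (p.getVert j) ↔ _
    rw [pathGraph_adj]
    refine ⟨fun h ↦ ?_, ?_⟩
    · by_contra hne
      rcases lt_trichotomy i.val j.val with hij | hij | hij
      · exact p.not_adj_getVert_of_length_eq_dist hp (by omega) (by omega) h
      · exact h.ne (congrArg p.getVert hij)
      · exact p.not_adj_getVert_of_length_eq_dist hp (by omega) (by omega) h.symm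
    · rintro (hij | hij)
      · rw [← hij]; exact p.adj_getVert_succ (by omega)
      · rw [← hij]; exact (p.adj_getVert_succ (by omega)).symm

@[simp]
theorem Walk.pathGraphEmbeddingOfLengthEqDist_apply {u v : V} (p : G.Walk u v)
    (hp : p.length = G.dist u v) (i : Fin (p.length + 1)) :
    p.pathGraphEmbeddingOfLengthEqDist hp i = p.getVert i :=
  rfl

theorem cycleGraph_adj_iff_val {n : ℕ} (hn : 2 ≤ n) {i j : Fin n} :
    (cycleGraph n).Adj i j ↔ i.val + 1 = j.val ∨ j.val + 1 = i.val ∨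
      (i.val = 0 ∧ j.val + 1 = n) ∨ (j.val = 0 ∧ i.val + 1 = n) := by
  rw [cycleGraph_adj']
  rcases lt_trichotomy i j with h | rfl | h
  · rw [Fin.coe_sub_iff_lt.mpr h, Fin.coe_sub_iff_le.mpr h.le]; omega
  · rw [Fin.coe_sub_iff_le.mpr le_rfl]; omega
  · rw [Fin.coe_sub_iff_le.mpr h.le, Fin.coe_sub_iff_lt.mpr h]; omega

theorem cycleGraph_adj_zero_succ {m : ℕ} {j : Fin (m + 1)} :
    (cycleGraph (m + 2)).Adj 0 j.succ ↔ j = 0 ∨ j = Fin.last m := by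
  simp only [cycleGraph_adj_iff_val (by omega : 2 ≤ m + 2), Fin.ext_iff, Fin.val_zero,
    Fin.val_succ, Fin.val_last, true_and]
  omega

theorem cycleGraph_adj_succ_succ {m : ℕ} {i j : Fin (m + 1)} :
    (cycleGraph (m + 2)).Adj i.succ j.succ ↔ (pathGraph (m + 1)).Adj i j := by
  simp only [cycleGraph_adj_iff_val (by omega : 2 ≤ m + 2), pathGraph_adj, Fin.val_succ]
  omega

def Embedding.cycleGraphOfApex {m : ℕ} (P : pathGraph (m + 1) ↪g G) (v : V)
    (hvP : ∀ i, v ≠ P i) (hv : ∀ i, G.Adj v (P i) ↔ i = 0 ∨ i = Fin.last m) :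
    cycleGraph (m + 2) ↪g G where
  toFun := Fin.cons v P
  inj' := Fin.cons_injective_iff.mpr ⟨fun ⟨i, hi⟩ ↦ hvP i hi.symm, P.injective⟩
  map_rel_iff' {i j} := by
    induction i using Fin.cases <;> induction j using Fin.cases
    · simp
    · simp [hv, cycleGraph_adj_zero_succ]
    · simp [G.adj_comm _ v, hv, (cycleGraph _).adj_comm _ 0, cycleGraph_adj_zero_succ]
    · simp [cycleGraph_adj_succ_succ]

-- A shortest `a`–`b` walk inside `s` is an induced path; `v` closes it into a hole.
theorem exists_cycleGraph_embedding_of_reachable_induce {s : Set V} {v a b : V}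
    (ha : a ∈ s) (hb : b ∈ s) (hab : a ≠ b) (hnab : ¬G.Adj a b)
    (hreach : (G.induce s).Reachable ⟨a, ha⟩ ⟨b, hb⟩)
    (hv : v ∉ s) (hva : G.Adj v a) (hvb : G.Adj v b)
    (hvN : ∀ x ∈ s, G.Adj v x → x = a ∨ x = b) :
    ∃ m, 2 ≤ m ∧ ∃ e : cycleGraph (m + 2) ↪g G, e 0 = v ∧ e (Fin.succ 0) = a ∧
      e (Fin.last m).succ = b ∧ ∀ i, e i = v ∨ e i ∈ s := by
  obtain ⟨p, hp⟩ := hreach.exists_walk_length_eq_dist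
  have hlen : 2 ≤ p.length :=
    hp ▸ hreach.one_lt_dist_of_ne_of_not_adj (by simpa using hab) (by simpa using hnab)
  set P := (Embedding.induce s).comp (p.pathGraphEmbeddingOfLengthEqDist hp)
  have hP0 : P 0 = a := by simp [P]
  have hPlast : P (Fin.last p.length) = b := by simp [P]
  have hPs (i) : P i ∈ s := (p.pathGraphEmbeddingOfLengthEqDist hp i).2
  refine ⟨p.length, hlen, P.cycleGraphOfApex v (fun i h ↦ hv (h ▸ hPs i)) fun i ↦ ?_,
    rfl, hP0, hPlast, fun i ↦ ?_⟩
  · refine ⟨fun h ↦ ?_, ?_⟩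
    · rcases hvN _ (hPs i) h with h | h
      · exact .inl (P.injective (h.trans hP0.symm))
      · exact .inr (P.injective (h.trans hPlast.symm))
    · rintro (rfl | rfl)
      exacts [hP0.symm ▸ hva, hPlast.symm ▸ hvb]
  · induction i using Fin.cases
    · exact .inl rfl
    · exact .inr (hPs _)

theorem containsThreeWheel_of_reachable {s : Set V} {v a b c : V} (ha : a ∈ s)
    (hab : a ≠ b) (hnab : ¬G.Adj a b) (hreach : (G.induce s).spanningCoe.Reachable a b)
    (hv : v ∉ s) (hva : G.Adj v a) (hvb : G.Adj v b)
    (hvN : ∀ x ∈ s, G.Adj v x → x = a ∨ x = b)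
    (hcs : c ∉ s) (hcv : G.Adj c v) (hca : G.Adj c a) (hcb : G.Adj c b) :
    ContainsThreeWheel G := by
  obtain ⟨_, hreach⟩ := reachable_induce_of_reachable_spanningCoe ha hreach
  obtain ⟨m, hm, e, he0, hea, heb, hes⟩ :=
    exists_cycleGraph_embedding_of_reachable_induce ha _ hab hnab hreach hv hva hvb hvN
  refine ⟨m + 2, by omega, e, c, fun i ↦ ?_, Fin.succ 0, 0, (Fin.last m).succ,
    (cycleGraph_adj_zero_succ.mpr (.inl rfl)).symm, cycleGraph_adj_zero_succ.mpr (.inr rfl),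
    ?_, hea ▸ hca, he0 ▸ hcv, heb ▸ hcb⟩
  · rcases hes i with h | h
    · exact h ▸ hcv.ne
    · exact fun hc ↦ hcs (hc ▸ h)
  · exact (Fin.succ_injective _).ne (Fin.ne_of_val_ne (by simp; omega))

variable (G) in
def nonNeighborSet (v : V) : Set V := {x | x ≠ v ∧ ¬G.Adj v x}

-- `G - N[v]`, kept on the vertex type `V`: the vertices of `N[v]` become isolated.
variable (G) in
def deleteClosedNbhd (v : V) : SimpleGraph V := (G.induce (G.nonNeighborSet v)).spanningCoe

theorem mem_nonNeighborSet_comm {v w : V} :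
    w ∈ G.nonNeighborSet v ↔ v ∈ G.nonNeighborSet w := by
  simp [nonNeighborSet, G.adj_comm, ne_comm]

theorem deleteClosedNbhd_adj {v x y : V} :
    (G.deleteClosedNbhd v).Adj x y ↔
      G.Adj x y ∧ x ∈ G.nonNeighborSet v ∧ y ∈ G.nonNeighborSet v :=
  spanningCoe_induce_adj

theorem mem_nonNeighborSet_of_reachable {v x y : V} (hx : x ∈ G.nonNeighborSet v)
    (h : (G.deleteClosedNbhd v).Reachable x y) : y ∈ G.nonNeighborSet v :=
  (reachable_induce_of_reachable_spanningCoe hx h).1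

section Extremal

variable {t z : V}

theorem adj_of_adj_of_reachable_deleteClosedNbhd (hz : z ∈ G.nonNeighborSet t) {x y : V}
    (hx : (G.deleteClosedNbhd t).Reachable z x) (hxy : G.Adj x y)
    (hy : ¬(G.deleteClosedNbhd t).Reachable z y) : G.Adj t y := by
  have hxt := mem_nonNeighborSet_of_reachable hz hx
  by_contra hty
  have hyt : y ≠ t := by rintro rfl; exact hxt.2 hxy.symm
  exact hy (hx.trans (deleteClosedNbhd_adj.mpr ⟨hxy, hxt, hyt, hty⟩).reachable)

variable [Finite V]

theorem reachable_deleteClosedNbhd_of_minimal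
    (hmin : ∀ t' z', z' ∈ G.nonNeighborSet t' →
      {x | (G.deleteClosedNbhd t).Reachable z x}.ncard ≤
        {x | (G.deleteClosedNbhd t').Reachable z' x}.ncard)
    (hz : z ∈ G.nonNeighborSet t) {v y : V} (hv : (G.deleteClosedNbhd t).Reachable z v)
    (hy : (G.deleteClosedNbhd t).Reachable z y) (hyv : y ∈ G.nonNeighborSet v) :
    (G.deleteClosedNbhd v).Reachable y t := by
  classical
  set C := {x | (G.deleteClosedNbhd t).Reachable z x}
  have hEC : ¬{x | (G.deleteClosedNbhd v).Reachable y x} ⊆ C := fun hEC ↦ by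
    have hvE : ¬(G.deleteClosedNbhd v).Reachable y v := fun h ↦
      (mem_nonNeighborSet_of_reachable hyv h).1 rfl
    exact (Set.ncard_lt_ncard ⟨hEC, fun h ↦ hvE (h hv)⟩).not_ge (hmin v y hyv)
  obtain ⟨w, ⟨p⟩, hwC⟩ := Set.not_subset.mp hEC
  obtain ⟨d, hd, hd₁, hd₂⟩ := p.exists_boundary_dart C hy hwC
  obtain ⟨hG, -, hd₂v⟩ := deleteClosedNbhd_adj.mp d.adj
  have htv : t ∈ G.nonNeighborSet v :=
    mem_nonNeighborSet_comm.mp (mem_nonNeighborSet_of_reachable hz hv)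
  have hyd : (G.deleteClosedNbhd v).Reachable y d.snd :=
    ⟨p.takeUntil _ (p.dart_snd_mem_support_of_mem_darts hd)⟩
  exact hyd.trans (deleteClosedNbhd_adj.mpr
    ⟨(adj_of_adj_of_reachable_deleteClosedNbhd hz hd₁ hG hd₂).symm, hd₂v, htv⟩).reachable

theorem exists_adj_reachable_deleteClosedNbhd
    (hmin : ∀ t' z', z' ∈ G.nonNeighborSet t' →
      {x | (G.deleteClosedNbhd t).Reachable z x}.ncard ≤
        {x | (G.deleteClosedNbhd t').Reachable z' x}.ncard)
    (hz : z ∈ G.nonNeighborSet t) {v : V} (hv : (G.deleteClosedNbhd t).Reachable z v)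
    (hvmin : ∀ w, (G.deleteClosedNbhd t).Reachable z w →
      (insert v (G.neighborSet v)).ncard ≤ (insert w (G.neighborSet w)).ncard)
    {a b : V} (hva : G.Adj v a) (hvb : G.Adj v b) (hab : a ≠ b) (hnab : ¬G.Adj a b) :
    ∃ y ∈ G.nonNeighborSet v, G.Adj a y ∧ (G.deleteClosedNbhd v).Reachable y t := by
  have htv : t ∈ G.nonNeighborSet v :=
    mem_nonNeighborSet_comm.mp (mem_nonNeighborSet_of_reachable hz hv)
  by_cases ha : (G.deleteClosedNbhd t).Reachable z a
  · obtain ⟨y, hyv, hay⟩ : ∃ y ∈ G.nonNeighborSet v, G.Adj a y := by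
      by_contra! hN
      have hsub : insert a (G.neighborSet a) ⊆ insert v (G.neighborSet v) := by
        rintro x (rfl | hax)
        · exact .inr hva
        · by_contra hx
          exact hN x ⟨fun h ↦ hx (.inl h), fun h ↦ hx (.inr h)⟩ hax
      have hb : b ∈ insert a (G.neighborSet a) :=
        Set.eq_of_subset_of_ncard_le hsub (hvmin a ha) ▸ Set.mem_insert_of_mem v hvb
      exact hb.elim hab.symm hnab
    refine ⟨y, hyv, hay, ?_⟩
    by_cases hy : (G.deleteClosedNbhd t).Reachable z y
    · exact reachable_deleteClosedNbhd_of_minimal hmin hz hv hy hyv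
    · exact (deleteClosedNbhd_adj.mpr
        ⟨(adj_of_adj_of_reachable_deleteClosedNbhd hz ha hay hy).symm, hyv, htv⟩).reachable
  · exact ⟨t, htv, (adj_of_adj_of_reachable_deleteClosedNbhd hz hv hva ha).symm, .rfl⟩

end Extremal

theorem exists_forall_reachable_through_nonNeighborSet [Finite V]
    (h : ∃ t z, z ∈ G.nonNeighborSet t) :
    ∃ v, ∀ a b, G.Adj v a → G.Adj v b → a ≠ b → ¬G.Adj a b →
      (G.induce (insert a (insert b (G.nonNeighborSet v)))).spanningCoe.Reachable a b := by
  obtain ⟨⟨t, z⟩, hz, hmin⟩ :=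
    Set.exists_min_image {p : V × V | p.2 ∈ G.nonNeighborSet p.1}
    (fun p ↦ {x | (G.deleteClosedNbhd p.1).Reachable p.2 x}.ncard) (Set.toFinite _)
    (by obtain ⟨t, z, hz⟩ := h; exact ⟨(t, z), hz⟩)
  obtain ⟨v, hv, hvmin⟩ := Set.exists_min_image {x | (G.deleteClosedNbhd t).Reachable z x}
    (fun w ↦ (insert w (G.neighborSet w)).ncard) (Set.toFinite _) ⟨z, .rfl⟩
  refine ⟨v, fun a b hva hvb hab hnab ↦ ?_⟩
  set H := (G.induce (insert a (insert b (G.nonNeighborSet v)))).spanningCoe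
  have hle : G.deleteClosedNbhd v ≤ H := fun x y hxy ↦ by
    obtain ⟨hxy, hx, hy⟩ := deleteClosedNbhd_adj.mp hxy
    exact spanningCoe_induce_adj.mpr ⟨hxy, .inr (.inr hx), .inr (.inr hy)⟩
  obtain ⟨y, hyv, hay, hyt⟩ := exists_adj_reachable_deleteClosedNbhd
    (fun t' z' hz' ↦ hmin (t', z') hz') hz hv hvmin hva hvb hab hnab
  obtain ⟨y', hy'v, hby', hy't⟩ := exists_adj_reachable_deleteClosedNbhd
    (fun t' z' hz' ↦ hmin (t', z') hz') hz hv hvmin hvb hva hab.symm fun h ↦ hnab h.symm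
  have hay : H.Adj a y := spanningCoe_induce_adj.mpr ⟨hay, .inl rfl, .inr (.inr hyv)⟩
  have hby' : H.Adj b y' := spanningCoe_induce_adj.mpr ⟨hby', .inr (.inl rfl), .inr (.inr hy'v)⟩
  exact hay.reachable.trans ((hyt.mono hle).trans ((hy't.mono hle).symm.trans hby'.reachable.symm))

end SimpleGraph

/-- Chudnovsky: every non-empty 3-wheel-free graph has a vertex whose
neighborhood induces a disjoint union of cliques, i.e. is `P₃`-free: any two
neighbors of a common vertex of the neighborhood are adjacent. -/
theorem stmt_9 {V : Type*} [Fintype V] [Nonempty V] (G : SimpleGraph V)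
    (h : ¬ ContainsThreeWheel G) :
    ∃ v : V, ∀ x y z : V, G.Adj v x → G.Adj v y → G.Adj v z →
      G.Adj x y → G.Adj y z → x ≠ z → G.Adj x z := by
  by_cases hK : ∃ t z, z ∈ G.nonNeighborSet t
  · obtain ⟨v, hv⟩ := G.exists_forall_reachable_through_nonNeighborSet hK
    refine ⟨v, fun a c b hva hvc hvb hac hcb hab ↦ by_contra fun hnab ↦ h ?_⟩
    refine containsThreeWheel_of_reachable (.inl rfl) hab hnab (hv a b hva hvb hab hnab)
      ?_ hva hvb ?_ ?_ hvc.symm hac.symm hcb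
    · rintro (h | h | h)
      exacts [hva.ne h, hvb.ne h, h.1 rfl]
    · rintro x (rfl | rfl | hx) hvx
      exacts [.inl rfl, .inr rfl, (hx.2 hvx).elim]
    · rintro (h | h | h)
      exacts [hac.ne h.symm, hcb.ne h, h.2 hvc]
  · exact ⟨Classical.arbitrary V, fun x _ z _ _ _ _ _ hxz ↦
      by_contra fun hnxz ↦ hK ⟨x, z, hxz.symm, hnxz⟩⟩
end
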